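/- arXiv:2303.17798 — 9 statements merged into one kernel-verified Lean document; each statement's English description precedes it below -/
import Mathlib

section
/- Let A be an associative algebra and M an A-bimodule. A linear map P : M → A is a relative averaging operator if and only if the graph Gr(P) = {(P(u), u) | u ∈ M} is a subalgebra of the diassociative algebra A ⊕ M (with (a,u) ⊣ (b,v) = (a·b, u·b), (a,u) ⊢ (b,v) = (a·b, a·v)), i.e. Gr(P) is closed under both ⊣ and ⊢. -/
/-- An `A`-bimodule structure on `M` over an associative algebra `A`:
left and right actions that are biadditive and associative/compatible. -/
structure ABimodule (A : Type*) (M : Type*) [Ring A] [AddCommGroup M] where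
  lsmul : A → M → M
  rsmul : M → A → M
  lsmul_add : ∀ a u v, lsmul a (u + v) = lsmul a u + lsmul a v
  add_lsmul : ∀ a b u, lsmul (a + b) u = lsmul a u + lsmul b u
  rsmul_add : ∀ u v a, rsmul (u + v) a = rsmul u a + rsmul v a
  add_rsmul : ∀ u a b, rsmul u (a + b) = rsmul u a + rsmul u b
  mul_lsmul : ∀ a b u, lsmul (a * b) u = lsmul a (lsmul b u)
  rsmul_mul : ∀ u a b, rsmul u (a * b) = rsmul (rsmul u a) b
  lsmul_rsmul : ∀ a u b, rsmul (lsmul a u) b = lsmul a (rsmul u b)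

/-- `P : M → A` is a relative averaging operator:
`P(u)·P(v) = P(P(u)·v) = P(u·P(v))`. -/
def IsRelAvgOp {A M : Type*} [Ring A] [AddCommGroup M]
    (ρ : ABimodule A M) (P : M → A) : Prop :=
  ∀ u v : M, P u * P v = P (ρ.lsmul (P u) v) ∧ P u * P v = P (ρ.rsmul u (P v))

theorem forall_mem_setOf_fst_eq_iff {A M : Type*} (P : M → A) (Q : A × M → Prop) :
    (∀ x ∈ {p : A × M | p.1 = P p.2}, Q x) ↔ ∀ u, Q (P u, u) :=
  ⟨fun h u => h (P u, u) rfl, by rintro h ⟨a, u⟩ (rfl : a = P u); exact h u⟩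

/-- `P : M → A` is a relative averaging operator iff its graph
`Gr(P) = {(P u, u) | u ∈ M}` is closed under both diassociative operations
`(a,u) ⊣ (b,v) = (a·b, u·b)` and `(a,u) ⊢ (b,v) = (a·b, a·v)` on `A ⊕ M`. -/
theorem isRelAvgOp_iff_graph_subalgebra
    (A M : Type*) [Ring A] [AddCommGroup M] (ρ : ABimodule A M) (P : M → A) :
    IsRelAvgOp ρ P ↔
      ∀ x ∈ {p : A × M | p.1 = P p.2}, ∀ y ∈ {p : A × M | p.1 = P p.2},
        ((x.1 * y.1, ρ.rsmul x.2 y.1) ∈ {p : A × M | p.1 = P p.2} ∧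
         (x.1 * y.1, ρ.lsmul x.1 y.2) ∈ {p : A × M | p.1 = P p.2}) := by
  simp only [forall_mem_setOf_fst_eq_iff]
  exact forall₂_congr fun _ _ => and_comm
end

section
/- Let A be an associative algebra and M an A-bimodule. A linear map P : M → A is a relative averaging operator if and only if the map N_P : A ⊕ M → A ⊕ M, N_P(a, u) = (P(u), 0), is a Nijenhuis operator on the diassociative algebra A ⊕ M. -/
def IsNijenhuis {D : Type*} [Add D] [Sub D] (mul : D → D → D) (N : D → D) : Prop :=
  ∀ a b, mul (N a) (N b) = N (mul (N a) b + mul a (N b) - N (mul a b))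

/-- `N_P` -/
def nijenhuisLift {A M : Type*} [Zero M] (P : M → A) (x : A × M) : A × M := (P x.2, 0)

namespace ABimodule

variable {A M : Type*} [Ring A] [AddCommGroup M] (ρ : ABimodule A M)

theorem lsmul_zero (a : A) : ρ.lsmul a 0 = 0 := by
  simpa using ρ.lsmul_add a 0 0

theorem zero_rsmul (a : A) : ρ.rsmul 0 a = 0 := by
  simpa using ρ.rsmul_add 0 0 a

/-- `⊣` -/
def leftDi (x y : A × M) : A × M := (x.1 * y.1, ρ.rsmul x.2 y.1)

/-- `⊢` -/
def rightDi (x y : A × M) : A × M := (x.1 * y.1, ρ.lsmul x.1 y.2)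

theorem isNijenhuis_leftDi_iff (P : M → A) :
    IsNijenhuis ρ.leftDi (nijenhuisLift P) ↔ ∀ u v, P u * P v = P (ρ.rsmul u (P v)) := by
  simp [IsNijenhuis, leftDi, nijenhuisLift, zero_rsmul]

theorem isNijenhuis_rightDi_iff (P : M → A) :
    IsNijenhuis ρ.rightDi (nijenhuisLift P) ↔ ∀ u v, P u * P v = P (ρ.lsmul (P u) v) := by
  simp [IsNijenhuis, rightDi, nijenhuisLift, lsmul_zero]

end ABimodule

theorem isRelAvgOp_iff_isNijenhuis {A M : Type*} [Ring A] [AddCommGroup M]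
    (ρ : ABimodule A M) (P : M → A) :
    IsRelAvgOp ρ P ↔
      IsNijenhuis ρ.leftDi (nijenhuisLift P) ∧ IsNijenhuis ρ.rightDi (nijenhuisLift P) := by
  rw [ρ.isNijenhuis_leftDi_iff, ρ.isNijenhuis_rightDi_iff, and_comm]
  simp only [IsRelAvgOp, forall_and]

/-- `P : M → A` is a relative averaging operator iff
`N_P(a,u) = (P u, 0)` is a Nijenhuis operator on the diassociative algebra `A ⊕ M`
(with `(a,u) ⊣ (b,v) = (a·b, u·b)`, `(a,u) ⊢ (b,v) = (a·b, a·v)`). -/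
theorem isRelAvgOp_iff_nijenhuis
    (A M : Type*) [Ring A] [AddCommGroup M] (ρ : ABimodule A M) (P : M → A) :
    IsRelAvgOp ρ P ↔
      (∀ x y : A × M,
        (let dl : A × M → A × M → A × M := fun x y => (x.1 * y.1, ρ.rsmul x.2 y.1)
         let dr : A × M → A × M → A × M := fun x y => (x.1 * y.1, ρ.lsmul x.1 y.2)
         let NP : A × M → A × M := fun x => (P x.2, 0)
         dl (NP x) (NP y) = NP (dl (NP x) y + dl x (NP y) - NP (dl x y)) ∧
         dr (NP x) (NP y) = NP (dr (NP x) y + dr x (NP y) - NP (dr x y)))) := by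
  rw [isRelAvgOp_iff_isNijenhuis]
  simp only [forall_and]
  rfl
end

section
/- Let P : M → A be a relative averaging operator. Then M carries a diassociative algebra structure with operations u ⊣_P v = u·P(v) and u ⊢_P v = P(u)·v; i.e. these operations satisfy the five diassociative identities. -/
/-- The five diassociative algebra identities for a pair of binary operations. -/
def IsDiassoc {D : Type*} (dl dr : D → D → D) : Prop :=
  ∀ x y z : D,
    dl (dl x y) z = dl x (dl y z) ∧
    dl x (dl y z) = dl x (dr y z) ∧
    dl (dr x y) z = dr x (dl y z) ∧
    dr (dl x y) z = dr (dr x y) z ∧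
    dr (dr x y) z = dr x (dr y z)

namespace IsRelAvgOp

variable {A M : Type*} [Ring A] [AddCommGroup M] {ρ : ABimodule A M} {P : M → A}

theorem map_lsmul (hP : IsRelAvgOp ρ P) (u v : M) : P (ρ.lsmul (P u) v) = P u * P v :=
  (hP u v).1.symm

theorem map_rsmul (hP : IsRelAvgOp ρ P) (u v : M) : P (ρ.rsmul u (P v)) = P u * P v :=
  (hP u v).2.symm

end IsRelAvgOp

/-- If `P : M → A` is a relative averaging operator, then
`u ⊣_P v = u·P(v)` and `u ⊢_P v = P(u)·v` make `M` a diassociative algebra. -/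
theorem inducedDiassoc_of_relAvgOp
    (A M : Type*) [Ring A] [AddCommGroup M] (ρ : ABimodule A M) (P : M → A)
    (hP : IsRelAvgOp ρ P) :
    IsDiassoc (D := M) (fun u v => ρ.rsmul u (P v)) (fun u v => ρ.lsmul (P u) v) := by
  intro x y z
  beta_reduce
  refine ⟨?_, ?_, ?_, ?_, ?_⟩
  · rw [hP.map_rsmul, ρ.rsmul_mul]
  · rw [hP.map_rsmul, hP.map_lsmul]
  · exact ρ.lsmul_rsmul (P x) y (P z)
  · rw [hP.map_rsmul, hP.map_lsmul]
  · rw [hP.map_lsmul, ρ.mul_lsmul]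
end

section
/- Let (D, ⊣, ⊢) be a diassociative algebra and D_Ass the quotient of D by the ideal generated by {a ⊣ b − a ⊢ b}. Then D_Ass is an associative algebra with [a]·[b] = [a ⊣ b], D is a D_Ass-bimodule via [a]·b = a ⊢ b and b·[a] = b ⊣ a, and the quotient map q : D → D_Ass is a relative averaging operator. Moreover, the diassociative structure on D induced by q coincides with the original one. -/
/-- The ideal of a diassociative algebra generated by the elements `a ⊣ b − a ⊢ b`:
the smallest additive subgroup containing these elements and closed under
left/right multiplication by arbitrary elements via both operations. -/
def diassIdeal {D : Type*} [AddCommGroup D] (dl dr : D → D → D) : AddSubgroup D :=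
  sInf {S : AddSubgroup D |
    (∀ a b : D, dl a b - dr a b ∈ S) ∧
    ∀ x ∈ S, ∀ d : D, dl x d ∈ S ∧ dl d x ∈ S ∧ dr x d ∈ S ∧ dr d x ∈ S}

/-! The ideal `I` annihilates `D` on the outside: `x ⊢ b = 0` and `b ⊣ x = 0` for `x ∈ I`,
because the elements with this property form a subgroup that contains every `a ⊣ b - a ⊢ b`
and, by the diassociative identities, is stable under both products; so it contains `I`.
Hence `⊢` and `⊣` descend to a left and a right action of `D ⧸ I` on `D`. Since `I` is also an
ideal for `⊣`, the product `⊣` descends to `D ⧸ I`, where it agrees with `⊢` because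
`a ⊣ b - a ⊢ b ∈ I`. All the remaining identities are the diassociative ones read on
representatives. -/

namespace QuotientAddGroup

variable {G G' H : Type*} [AddCommGroup G] [AddCommGroup G'] [AddCommGroup H]

def lift₂ (N : AddSubgroup G) (N' : AddSubgroup G') (B : G →+ G' →+ H) (hN : N ≤ B.ker)
    (hN' : N' ≤ B.flip.ker) : G ⧸ N →+ G' ⧸ N' →+ H :=
  lift N (lift N' B.flip hN').flip fun x hx => by
    ext y
    simp [AddMonoidHom.mem_ker.1 (hN hx)]

theorem le_ker_compr₂_mk {N : AddSubgroup G} {B : G →+ G' →+ G} (h : ∀ x ∈ N, ∀ y, B x y ∈ N) :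
    N ≤ (B.compr₂ (mk' N)).ker := fun x hx =>
  AddMonoidHom.ext fun y => (eq_zero_iff _).2 (h x hx y)

theorem le_flip_ker_compr₂_mk {N : AddSubgroup G} {B : G' →+ G →+ G}
    (h : ∀ y ∈ N, ∀ x, B x y ∈ N) : N ≤ (B.compr₂ (mk' N)).flip.ker := fun y hy =>
  AddMonoidHom.ext fun x => (eq_zero_iff _).2 (h y hy x)

end QuotientAddGroup

def AddMonoidHom.mk₂ {M N P : Type*} [AddCommGroup M] [AddCommGroup N] [AddCommGroup P]
    (f : M → N → P) (h₁ : ∀ a a' b, f (a + a') b = f a b + f a' b)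
    (h₂ : ∀ a b b', f a (b + b') = f a b + f a b') : M →+ N →+ P :=
  AddMonoidHom.mk' (fun a => AddMonoidHom.mk' (f a) (h₂ a)) fun a a' =>
    AddMonoidHom.ext (h₁ a a')

namespace IsDiassoc

variable {D : Type*} {dl dr : D → D → D}

theorem dl_assoc (hD : IsDiassoc dl dr) (x y z : D) : dl (dl x y) z = dl x (dl y z) :=
  (hD x y z).1

theorem dl_dl_eq_dl_dr (hD : IsDiassoc dl dr) (x y z : D) : dl x (dl y z) = dl x (dr y z) :=
  (hD x y z).2.1

theorem dl_dr_assoc (hD : IsDiassoc dl dr) (x y z : D) : dl (dr x y) z = dr x (dl y z) :=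
  (hD x y z).2.2.1

theorem dr_dl_eq_dr_dr (hD : IsDiassoc dl dr) (x y z : D) : dr (dl x y) z = dr (dr x y) z :=
  (hD x y z).2.2.2.1

theorem dr_assoc (hD : IsDiassoc dl dr) (x y z : D) : dr (dr x y) z = dr x (dr y z) :=
  (hD x y z).2.2.2.2

end IsDiassoc

section diassIdeal

variable {D : Type*} [AddCommGroup D] {dl dr : D → D → D}

theorem sub_mem_diassIdeal (a b : D) : dl a b - dr a b ∈ diassIdeal dl dr :=
  AddSubgroup.mem_sInf.2 fun _ hS => hS.1 a b

theorem diassIdeal_le {S : AddSubgroup D} (hgen : ∀ a b, dl a b - dr a b ∈ S)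
    (hmul : ∀ x ∈ S, ∀ d, dl x d ∈ S ∧ dl d x ∈ S ∧ dr x d ∈ S ∧ dr d x ∈ S) :
    diassIdeal dl dr ≤ S :=
  sInf_le ⟨hgen, hmul⟩

theorem dl_mem_diassIdeal_left {x : D} (hx : x ∈ diassIdeal dl dr) (d : D) :
    dl x d ∈ diassIdeal dl dr :=
  AddSubgroup.mem_sInf.2 fun S hS => (hS.2 x (AddSubgroup.mem_sInf.1 hx S hS) d).1

theorem dl_mem_diassIdeal_right {x : D} (hx : x ∈ diassIdeal dl dr) (d : D) :
    dl d x ∈ diassIdeal dl dr :=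
  AddSubgroup.mem_sInf.2 fun S hS => (hS.2 x (AddSubgroup.mem_sInf.1 hx S hS) d).2.1

end diassIdeal

theorem IsDiassoc.diassIdeal_le_ker {D : Type*} [AddCommGroup D] {L R : D →+ D →+ D}
    (hD : IsDiassoc (L · ·) (R · ·)) :
    diassIdeal (L · ·) (R · ·) ≤ R.ker ⊓ L.flip.ker := by
  have mem_iff : ∀ x, x ∈ R.ker ⊓ L.flip.ker ↔ (∀ b, R x b = 0) ∧ ∀ b, L b x = 0 := fun x => by
    simp [AddMonoidHom.ext_iff]
  refine diassIdeal_le (fun a b => (mem_iff _).2 ⟨fun c => ?_, fun c => ?_⟩) fun x hx d => ?_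
  · simp [hD.dr_dl_eq_dr_dr]
  · simp [hD.dl_dl_eq_dl_dr]
  obtain ⟨hR, hL⟩ := (mem_iff x).1 hx
  simp only [mem_iff]
  simp [← hD.dl_assoc, ← hD.dl_dl_eq_dl_dr, hD.dr_dl_eq_dr_dr, hD.dr_assoc, hR, hL]

/-- For a diassociative algebra `D`, the quotient `D_Ass = D / I`
(by the ideal generated by the `a⊣b − a⊢b`) is an associative algebra with
`[a]·[b] = [a⊣b] = [a⊢b]`, `D` is a `D_Ass`-bimodule via `[a]·b = a⊢b`,
`b·[a] = b⊣a`, the quotient map `q` is a relative averaging operator, and the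
diassociative structure induced by `q` coincides with the original one. -/
theorem quotient_relativeAveraging
    (D : Type*) [AddCommGroup D] (dl dr : D → D → D)
    (hdl₁ : ∀ a b c : D, dl (a + b) c = dl a c + dl b c)
    (hdl₂ : ∀ a b c : D, dl a (b + c) = dl a b + dl a c)
    (hdr₁ : ∀ a b c : D, dr (a + b) c = dr a c + dr b c)
    (hdr₂ : ∀ a b c : D, dr a (b + c) = dr a b + dr a c)
    (hD : IsDiassoc dl dr) :
    letI I := diassIdeal dl dr
    let q : D →+ D ⧸ I := QuotientAddGroup.mk' I
    ∃ (mul : (D ⧸ I) → (D ⧸ I) → (D ⧸ I))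
      (la : (D ⧸ I) → D → D) (ra : D → (D ⧸ I) → D),
      -- the product is well defined by `[a]·[b] = [a⊣b] = [a⊢b]`
      (∀ a b : D, mul (q a) (q b) = q (dl a b)) ∧
      (∀ a b : D, mul (q a) (q b) = q (dr a b)) ∧
      -- the actions are well defined by `[a]·b = a ⊢ b` and `b·[a] = b ⊣ a`
      (∀ a b : D, la (q a) b = dr a b) ∧
      (∀ b a : D, ra b (q a) = dl b a) ∧
      -- `D_Ass` is an associative algebra
      (∀ x y z : D ⧸ I, mul (mul x y) z = mul x (mul y z)) ∧
      (∀ x y z : D ⧸ I, mul (x + y) z = mul x z + mul y z) ∧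
      (∀ x y z : D ⧸ I, mul x (y + z) = mul x y + mul x z) ∧
      -- `D` is a `D_Ass`-bimodule
      (∀ (x y : D ⧸ I) (b : D), la (mul x y) b = la x (la y b)) ∧
      (∀ (b : D) (x y : D ⧸ I), ra (ra b x) y = ra b (mul x y)) ∧
      (∀ (x : D ⧸ I) (b : D) (y : D ⧸ I), ra (la x b) y = la x (ra b y)) ∧
      (∀ (x : D ⧸ I) (b b' : D), la x (b + b') = la x b + la x b') ∧
      (∀ (x y : D ⧸ I) (b : D), la (x + y) b = la x b + la y b) ∧
      (∀ (b b' : D) (x : D ⧸ I), ra (b + b') x = ra b x + ra b' x) ∧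
      (∀ (b : D) (x y : D ⧸ I), ra b (x + y) = ra b x + ra b y) ∧
      -- the quotient map is a relative averaging operator
      (∀ u v : D, mul (q u) (q v) = q (la (q u) v)) ∧
      (∀ u v : D, mul (q u) (q v) = q (ra u (q v))) ∧
      -- the induced diassociative structure coincides with the original one
      (∀ u v : D, ra u (q v) = dl u v) ∧
      (∀ u v : D, la (q u) v = dr u v) := by
  intro q
  let I := diassIdeal dl dr
  let L := AddMonoidHom.mk₂ dl hdl₁ hdl₂
  let R := AddMonoidHom.mk₂ dr hdr₁ hdr₂
  have hDLR : IsDiassoc (L · ·) (R · ·) := hD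
  have hker := hDLR.diassIdeal_le_ker
  let mul := QuotientAddGroup.lift₂ I I (L.compr₂ q)
    (QuotientAddGroup.le_ker_compr₂_mk fun _ hx => dl_mem_diassIdeal_left hx)
    (QuotientAddGroup.le_flip_ker_compr₂_mk fun _ hx => dl_mem_diassIdeal_right hx)
  let la := QuotientAddGroup.lift I R (hker.trans inf_le_left)
  let ra := QuotientAddGroup.lift I L.flip (hker.trans inf_le_right)
  have q_dl_eq_q_dr (a b : D) : q (dl a b) = q (dr a b) :=
    (QuotientAddGroup.eq_iff_sub_mem).2 (sub_mem_diassIdeal a b)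
  refine ⟨(mul · ·), (la · ·), fun b x => ra x b, fun _ _ => rfl, q_dl_eq_q_dr, fun _ _ => rfl,
    fun _ _ => rfl, fun x y z => ?_, by simp, by simp, fun x y b => ?_, fun b x y => ?_,
    fun x b y => ?_, by simp, by simp, by simp, by simp, q_dl_eq_q_dr, fun _ _ => rfl,
    fun _ _ => rfl, fun _ _ => rfl⟩
  · induction x using QuotientAddGroup.induction_on
    induction y using QuotientAddGroup.induction_on
    induction z using QuotientAddGroup.induction_on
    exact congrArg q (hD.dl_assoc _ _ _)
  · induction x using QuotientAddGroup.induction_on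
    induction y using QuotientAddGroup.induction_on
    exact (hD.dr_dl_eq_dr_dr _ _ _).trans (hD.dr_assoc _ _ _)
  · induction x using QuotientAddGroup.induction_on
    induction y using QuotientAddGroup.induction_on
    exact hD.dl_assoc _ _ _
  · induction x using QuotientAddGroup.induction_on
    induction y using QuotientAddGroup.induction_on
    exact hD.dl_dr_assoc _ _ _
end

section
/- For any diassociative algebra D and any relative averaging algebra (A, M, P), there is a natural bijection Hom_Diass(D, M_P) ≅ Hom_rAvg(D → D_Ass, M → A): every diassociative morphism ψ : D → M_P extends uniquely to a relative averaging algebra morphism (φ^ψ, ψ) where φ^ψ([a]) = P(ψ(a)). (In particular, the functor D ↦ (D → D_Ass) is left adjoint to (M → A) ↦ M_P.) -/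
theorem diassIdeal_le_ker {D R : Type*} [AddCommGroup D] [NonUnitalNonAssocRing R]
    {dl dr : D → D → D} (f : D →+ R) (hl : ∀ a b, f (dl a b) = f a * f b)
    (hr : ∀ a b, f (dr a b) = f a * f b) : diassIdeal dl dr ≤ f.ker := by
  refine sInf_le ⟨fun a b => ?_, fun x hx d => ?_⟩
  · rw [AddMonoidHom.mem_ker, map_sub, hl, hr, sub_self]
  · rw [AddMonoidHom.mem_ker] at hx
    simp only [AddMonoidHom.mem_ker, hl, hr, hx, zero_mul, mul_zero, and_self]

theorem diass_quotient_adjunction_general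
    (D : Type*) [AddCommGroup D] (dl dr : D → D → D)
    -- the quotient associative algebra `B = D_Ass` with quotient map `q`
    (B : Type*) [NonUnitalRing B] (q : D → B)
    (hq_surj : Function.Surjective q)
    (hq_add : ∀ a b, q (a + b) = q a + q b)
    (hq_mul₁ : ∀ a b, q a * q b = q (dl a b))
    (hker : ∀ x, q x = 0 ↔ x ∈ diassIdeal dl dr)
    -- the `B`-bimodule structure on `D`: `[a]·b = a ⊢ b`, `b·[a] = b ⊣ a`
    (lB : B → D → D) (rB : D → B → D)
    (hlB : ∀ a b, lB (q a) b = dr a b)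
    (hrB : ∀ b a, rB b (q a) = dl b a)
    -- a relative averaging algebra `(A, M, P)`
    (A M : Type*) [Ring A] [AddCommGroup M] (ρ : ABimodule A M)
    (P : M → A) (hP : IsRelAvgOp ρ P)
    (hP_add : ∀ u v, P (u + v) = P u + P v)
    -- a diassociative algebra morphism `ψ : D → M_P`
    (ψ : D → M)
    (hψ_add : ∀ a b, ψ (a + b) = ψ a + ψ b)
    (hψ₁ : ∀ a b, ψ (dl a b) = ρ.rsmul (ψ a) (P (ψ b)))
    (hψ₂ : ∀ a b, ψ (dr a b) = ρ.lsmul (P (ψ a)) (ψ b)) :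
    ∃! φ : B → A,
      (∀ b b', φ (b + b') = φ b + φ b') ∧
      (∀ b b', φ (b * b') = φ b * φ b') ∧
      (∀ (b : B) (x : D), ψ (lB b x) = ρ.lsmul (φ b) (ψ x)) ∧
      (∀ (x : D) (b : B), ψ (rB x b) = ρ.rsmul (ψ x) (φ b)) ∧
      (∀ x : D, φ (q x) = P (ψ x)) := by
  let f : D →+ A := (AddMonoidHom.mk' P hP_add).comp (AddMonoidHom.mk' ψ hψ_add)
  have hf : ∀ x, f x = P (ψ x) := fun _ => rfl
  have hker_le : (AddMonoidHom.mk' q hq_add).ker ≤ f.ker := fun x hx =>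
    diassIdeal_le_ker f (fun a b => by simp only [hf, hψ₁, hP.map_rsmul])
      (fun a b => by simp only [hf, hψ₂, hP.map_lsmul]) ((hker x).1 hx)
  let φ := (AddMonoidHom.mk' q hq_add).liftOfSurjective hq_surj ⟨f, hker_le⟩
  have hφq : ∀ x, φ (q x) = P (ψ x) :=
    AddMonoidHom.liftOfRightInverse_comp_apply _ _ _ ⟨f, hker_le⟩
  refine ⟨φ, ⟨map_add φ, ?_, ?_, ?_, hφq⟩, fun φ' hφ' => funext (hq_surj.forall.2 fun x => ?_)⟩
  · exact hq_surj.forall₂.2 fun a b => by rw [hq_mul₁, hφq, hφq, hφq, hψ₁, hP.map_rsmul]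
  · exact hq_surj.forall.2 fun a x => by rw [hlB, hψ₂, hφq]
  · exact fun x => hq_surj.forall.2 fun a => by rw [hrB, hψ₁, hφq]
  · rw [hφ'.2.2.2.2, hφq]

/-- Adjunction: for a diassociative algebra `D` (with its quotient
`D_Ass = B`, quotient map `q`, and the induced `B`-bimodule structure on `D`) and
any relative averaging algebra `(A, M, P)`, every diassociative algebra morphism
`ψ : D → M_P` extends uniquely to a morphism `(φ, ψ)` of relative averaging
algebras from `(B, D, q)` to `(A, M, P)`, with `φ([a]) = P(ψ a)`.  This gives the
bijection `Hom_Diass(D, M_P) ≅ Hom_rAvg(D → D_Ass, M → A)`, i.e. the functor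
`D ↦ (D → D_Ass)` is left adjoint to `(M → A) ↦ M_P`. -/
theorem diass_quotient_adjunction
    (D : Type*) [AddCommGroup D] (dl dr : D → D → D)
    (hdl₁ : ∀ a b c : D, dl (a + b) c = dl a c + dl b c)
    (hdl₂ : ∀ a b c : D, dl a (b + c) = dl a b + dl a c)
    (hdr₁ : ∀ a b c : D, dr (a + b) c = dr a c + dr b c)
    (hdr₂ : ∀ a b c : D, dr a (b + c) = dr a b + dr a c)
    (hD : IsDiassoc dl dr)
    -- the quotient associative algebra `B = D_Ass` with quotient map `q`
    (B : Type*) [NonUnitalRing B] (q : D → B)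
    (hq_surj : Function.Surjective q)
    (hq_add : ∀ a b, q (a + b) = q a + q b)
    (hq_mul₁ : ∀ a b, q a * q b = q (dl a b))
    (hq_mul₂ : ∀ a b, q a * q b = q (dr a b))
    (hker : ∀ x, q x = 0 ↔ x ∈ diassIdeal dl dr)
    -- the `B`-bimodule structure on `D`: `[a]·b = a ⊢ b`, `b·[a] = b ⊣ a`
    (lB : B → D → D) (rB : D → B → D)
    (hlB : ∀ a b, lB (q a) b = dr a b)
    (hrB : ∀ b a, rB b (q a) = dl b a)
    -- a relative averaging algebra `(A, M, P)`
    (A M : Type*) [Ring A] [AddCommGroup M] (ρ : ABimodule A M)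
    (P : M → A) (hP : IsRelAvgOp ρ P)
    (hP_add : ∀ u v, P (u + v) = P u + P v)
    -- a diassociative algebra morphism `ψ : D → M_P`
    (ψ : D → M)
    (hψ_add : ∀ a b, ψ (a + b) = ψ a + ψ b)
    (hψ₁ : ∀ a b, ψ (dl a b) = ρ.rsmul (ψ a) (P (ψ b)))
    (hψ₂ : ∀ a b, ψ (dr a b) = ρ.lsmul (P (ψ a)) (ψ b)) :
    ∃! φ : B → A,
      (∀ b b', φ (b + b') = φ b + φ b') ∧
      (∀ b b', φ (b * b') = φ b * φ b') ∧
      (∀ (b : B) (x : D), ψ (lB b x) = ρ.lsmul (φ b) (ψ x)) ∧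
      (∀ (x : D) (b : B), ψ (rB x b) = ρ.rsmul (ψ x) (φ b)) ∧
      (∀ x : D, φ (q x) = P (ψ x)) :=
  diass_quotient_adjunction_general D dl dr B q hq_surj hq_add hq_mul₁ hker lB rB hlB hrB A M ρ P hP
    hP_add ψ hψ_add hψ₁ hψ₂
end

section
/- Let (A, M, P) be a relative averaging algebra and (N → B (map Q), l, r) a bimodule over it. Then P ⊕ Q : M ⊕ N → A ⊕ B is a relative averaging operator, where A ⊕ B is the semidirect product algebra (a,b)·(a',b') = (a·a', a·b' + b·a') and M ⊕ N is an (A⊕B)-bimodule via (a,b)▷(u,n) = (a·u, a·n + r(b,u)) and (u,n)◁(a,b) = (u·a, l(u,b) + n·a). -/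
/-- A bimodule `(N → B, l, r)` over a relative averaging algebra `(A, M, P)`. -/
structure RAvgBimodule {A M : Type*} [Ring A] [AddCommGroup M]
    (B N : Type*) [AddCommGroup B] [AddCommGroup N]
    (ρM : ABimodule A M) (P : M → A) where
  ρB : ABimodule A B
  ρN : ABimodule A N
  l : M → B → N
  r : B → M → N
  Q : N → B
  Q_add : ∀ n n', Q (n + n') = Q n + Q n'
  l_addl : ∀ u u' b, l (u + u') b = l u b + l u' b
  l_addr : ∀ u b b', l u (b + b') = l u b + l u b'
  r_addl : ∀ b b' u, r (b + b') u = r b u + r b' u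
  r_addr : ∀ b u u', r b (u + u') = r b u + r b u'
  dasm1a : ∀ a u b, l (ρM.lsmul a u) b = ρN.lsmul a (l u b)
  dasm1b : ∀ u a b, l (ρM.rsmul u a) b = l u (ρB.lsmul a b)
  dasm1c : ∀ u b a, l u (ρB.rsmul b a) = ρN.rsmul (l u b) a
  dasm2a : ∀ a b u, r (ρB.lsmul a b) u = ρN.lsmul a (r b u)
  dasm2b : ∀ b a u, r (ρB.rsmul b a) u = r b (ρM.lsmul a u)
  dasm2c : ∀ b u a, r b (ρM.rsmul u a) = ρN.rsmul (r b u) a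
  dasm3a : ∀ u n, ρB.lsmul (P u) (Q n) = Q (ρN.lsmul (P u) n)
  dasm3b : ∀ u n, ρB.lsmul (P u) (Q n) = Q (l u (Q n))
  dasm4a : ∀ n u, ρB.rsmul (Q n) (P u) = Q (r (Q n) u)
  dasm4b : ∀ n u, ρB.rsmul (Q n) (P u) = Q (ρN.rsmul n (P u))

namespace RAvgBimodule

variable {A M B N : Type*} [Ring A] [AddCommGroup M] [AddCommGroup B] [AddCommGroup N]
  {ρM : ABimodule A M} {P : M → A}

theorem lsmul_Q_add_rsmul_Q_eq_Q_lsmul_add_r (W : RAvgBimodule B N ρM P)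
    (u u' : M) (n n' : N) :
    W.ρB.lsmul (P u) (W.Q n') + W.ρB.rsmul (W.Q n) (P u') =
      W.Q (W.ρN.lsmul (P u) n' + W.r (W.Q n) u') := by
  rw [W.Q_add, W.dasm3a, W.dasm4a]

theorem lsmul_Q_add_rsmul_Q_eq_Q_l_add_rsmul (W : RAvgBimodule B N ρM P)
    (u u' : M) (n n' : N) :
    W.ρB.lsmul (P u) (W.Q n') + W.ρB.rsmul (W.Q n) (P u') =
      W.Q (W.l u (W.Q n') + W.ρN.rsmul n (P u')) := by
  rw [W.Q_add, W.dasm3b, W.dasm4b]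

end RAvgBimodule

/-- Semidirect product: for a relative averaging algebra `(A, M, P)`
and a bimodule `(N → B, l, r)` over it, the map `P ⊕ Q : M ⊕ N → A ⊕ B` is a
relative averaging operator for the semidirect product algebra structure on
`A ⊕ B` and the induced `(A ⊕ B)`-bimodule structure on `M ⊕ N`. -/
theorem semidirectProduct_relativeAveraging
    (A M B N : Type*) [Ring A] [AddCommGroup M] [AddCommGroup B] [AddCommGroup N]
    (ρM : ABimodule A M) (P : M → A) (hP : IsRelAvgOp ρM P)
    (W : RAvgBimodule B N ρM P) :
    let prod : A × B → A × B → A × B :=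
      fun x y => (x.1 * y.1, W.ρB.lsmul x.1 y.2 + W.ρB.rsmul x.2 y.1)
    let lact : A × B → M × N → M × N :=
      fun x z => (ρM.lsmul x.1 z.1, W.ρN.lsmul x.1 z.2 + W.r x.2 z.1)
    let ract : M × N → A × B → M × N :=
      fun z x => (ρM.rsmul z.1 x.1, W.l z.1 x.2 + W.ρN.rsmul z.2 x.1)
    let PQ : M × N → A × B := fun z => (P z.1, W.Q z.2)
    ∀ z z' : M × N,
      prod (PQ z) (PQ z') = PQ (lact (PQ z) z') ∧
      prod (PQ z) (PQ z') = PQ (ract z (PQ z')) := by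
  intro prod lact ract PQ ⟨u, n⟩ ⟨u', n'⟩
  exact ⟨Prod.ext (hP u u').1 (W.lsmul_Q_add_rsmul_Q_eq_Q_lsmul_add_r u u' n n'),
    Prod.ext (hP u u').2 (W.lsmul_Q_add_rsmul_Q_eq_Q_l_add_rsmul u u' n n')⟩
end

section
/- Let (A, M, P) be a relative averaging algebra and (N → B (map Q), l, r) a bimodule over it. Then N is a representation of the induced diassociative algebra M_P with action maps u ⊣ n = l(u, Q(n)), u ⊢ n = P(u)·n, n ⊣ u = n·P(u), n ⊢ u = r(Q(n), u). -/
/-- The fifteen identities making `V` a representation of the diassociative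
algebra `(M, dl, dr)`, with actions `mdl : u ⊣ n`, `mdr : u ⊢ n`,
`ndl : n ⊣ u`, `ndr : n ⊢ u`. -/
def IsDiassRep {M V : Type*} (dl dr : M → M → M)
    (mdl mdr : M → V → V) (ndl ndr : V → M → V) : Prop :=
  ∀ (u v : M) (n : V),
    -- first argument in `V`
    (ndl (ndl n u) v = ndl n (dl u v)) ∧
    (ndl n (dl u v) = ndl n (dr u v)) ∧
    (ndl (ndr n u) v = ndr n (dl u v)) ∧
    (ndr (ndl n u) v = ndr (ndr n u) v) ∧
    (ndr (ndr n u) v = ndr n (dr u v)) ∧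
    -- second argument in `V`
    (ndl (mdl u n) v = mdl u (ndl n v)) ∧
    (mdl u (ndl n v) = mdl u (ndr n v)) ∧
    (ndl (mdr u n) v = mdr u (ndl n v)) ∧
    (ndr (mdl u n) v = ndr (mdr u n) v) ∧
    (ndr (mdr u n) v = mdr u (ndr n v)) ∧
    -- third argument in `V`
    (mdl (dl u v) n = mdl u (mdl v n)) ∧
    (mdl u (mdl v n) = mdl u (mdr v n)) ∧
    (mdl (dr u v) n = mdr u (mdl v n)) ∧
    (mdr (dl u v) n = mdr (dr u v) n) ∧
    (mdr (dr u v) n = mdr u (mdr v n))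

/-! The identities that do not follow directly from the bimodule axioms are those whose two
sides feed different elements to `P` or `Q`. These are matched by `P(u·P v) = P(P u·v)` in `A`
and by `Q(n·P u) = Q(r(Q n, u))`, `Q(P u·n) = Q(l(u, Q n))` in `B`: both sides of each equal
the same product (`P u·P v`, `Q n·P u`, resp. `P u·Q n`). -/

theorem IsRelAvgOp.P_rsmul_eq_P_lsmul {A M : Type*} [Ring A] [AddCommGroup M]
    {ρ : ABimodule A M} {P : M → A} (hP : IsRelAvgOp ρ P) (u v : M) :
    P (ρ.rsmul u (P v)) = P (ρ.lsmul (P u) v) :=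
  (hP u v).2.symm.trans (hP u v).1

namespace RAvgBimodule

variable {A M B N : Type*} [Ring A] [AddCommGroup M] [AddCommGroup B] [AddCommGroup N]
  {ρM : ABimodule A M} {P : M → A} (W : RAvgBimodule B N ρM P)

theorem Q_rsmul_P_eq_Q_r (n : N) (u : M) :
    W.Q (W.ρN.rsmul n (P u)) = W.Q (W.r (W.Q n) u) :=
  (W.dasm4b n u).symm.trans (W.dasm4a n u)

theorem Q_lsmul_P_eq_Q_l (u : M) (n : N) :
    W.Q (W.ρN.lsmul (P u) n) = W.Q (W.l u (W.Q n)) :=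
  (W.dasm3a u n).symm.trans (W.dasm3b u n)

end RAvgBimodule

/-- For a bimodule `(N → B, l, r)` over a relative averaging algebra
`(A, M, P)`, the space `N` is a representation of the induced diassociative
algebra `M_P` with `u ⊣ n = l(u, Q n)`, `u ⊢ n = P(u)·n`, `n ⊣ u = n·P(u)`,
`n ⊢ u = r(Q n, u)`. -/
theorem bimodule_gives_diassRep_on_N
    (A M B N : Type*) [Ring A] [AddCommGroup M] [AddCommGroup B] [AddCommGroup N]
    (ρM : ABimodule A M) (P : M → A) (hP : IsRelAvgOp ρM P)
    (W : RAvgBimodule B N ρM P) :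
    IsDiassRep (M := M) (V := N)
      (fun u v => ρM.rsmul u (P v)) (fun u v => ρM.lsmul (P u) v)
      (fun u n => W.l u (W.Q n)) (fun u n => W.ρN.lsmul (P u) n)
      (fun n u => W.ρN.rsmul n (P u)) (fun n u => W.r (W.Q n) u) := by
  intro u v n
  obtain ⟨hPl, hPr⟩ := hP u v
  beta_reduce
  refine ⟨?_, ?_, ?_, ?_, ?_, ?_, ?_, ?_, ?_, ?_, ?_, ?_, ?_, ?_, ?_⟩
  · rw [← W.ρN.rsmul_mul, hPr]
  · rw [hP.P_rsmul_eq_P_lsmul]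
  · exact (W.dasm2c _ _ _).symm
  · rw [W.Q_rsmul_P_eq_Q_r]
  · rw [← W.Q_rsmul_P_eq_Q_r, ← W.dasm4b, W.dasm2b]
  · rw [← W.dasm4b, W.dasm1c]
  · rw [W.Q_rsmul_P_eq_Q_r]
  · exact W.ρN.lsmul_rsmul _ _ _
  · rw [W.Q_lsmul_P_eq_Q_l]
  · rw [← W.dasm3a, W.dasm2a]
  · rw [W.dasm1b, W.dasm3b]
  · rw [W.Q_lsmul_P_eq_Q_l]
  · exact W.dasm1a _ _ _
  · rw [hP.P_rsmul_eq_P_lsmul]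
  · rw [← hPl, W.ρN.mul_lsmul]
end

section
/- Let (A, M, P) be a relative averaging algebra and (N → B (map Q), l, r) a bimodule over it. Then B is a representation of the induced diassociative algebra M_P with action maps u ⊣ b = P(u)·b − Q(l(u, b)), u ⊢ b = P(u)·b, b ⊣ u = b·P(u), b ⊢ u = b·P(u) − Q(r(b, u)). -/
namespace ABimodule

variable {A M : Type*} [Ring A] [AddCommGroup M] (ρ : ABimodule A M)

theorem lsmul_sub (a : A) (u v : M) : ρ.lsmul a (u - v) = ρ.lsmul a u - ρ.lsmul a v :=
  (AddMonoidHom.mk' (ρ.lsmul a) (ρ.lsmul_add a)).map_sub u v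

theorem sub_rsmul (u v : M) (a : A) : ρ.rsmul (u - v) a = ρ.rsmul u a - ρ.rsmul v a :=
  (AddMonoidHom.mk' (ρ.rsmul · a) (ρ.rsmul_add · · a)).map_sub u v

end ABimodule

namespace RAvgBimodule

variable {A M B N : Type*} [Ring A] [AddCommGroup M] [AddCommGroup B] [AddCommGroup N]
  {ρM : ABimodule A M} {P : M → A} (W : RAvgBimodule B N ρM P)

theorem Q_sub (n n' : N) : W.Q (n - n') = W.Q n - W.Q n' :=
  (AddMonoidHom.mk' W.Q W.Q_add).map_sub n n'

theorem l_sub (u : M) (b b' : B) : W.l u (b - b') = W.l u b - W.l u b' :=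
  (AddMonoidHom.mk' (W.l u) (W.l_addr u)).map_sub b b'

theorem sub_r (b b' : B) (u : M) : W.r (b - b') u = W.r b u - W.r b' u :=
  (AddMonoidHom.mk' (W.r · u) (W.r_addl · · u)).map_sub b b'

theorem Q_l_lsmul (u v : M) (b : B) :
    W.Q (W.l (ρM.lsmul (P u) v) b) = W.ρB.lsmul (P u) (W.Q (W.l v b)) := by
  rw [W.dasm1a, W.dasm3a]

theorem Q_l_rsmul (u : M) (b : B) (v : M) :
    W.Q (W.l u (W.ρB.rsmul b (P v))) = W.ρB.rsmul (W.Q (W.l u b)) (P v) := by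
  rw [W.dasm1c, W.dasm4b]

theorem Q_r_lsmul (u : M) (b : B) (v : M) :
    W.Q (W.r (W.ρB.lsmul (P u) b) v) = W.ρB.lsmul (P u) (W.Q (W.r b v)) := by
  rw [W.dasm2a, W.dasm3a]

theorem Q_r_rsmul (b : B) (u v : M) :
    W.Q (W.r b (ρM.rsmul u (P v))) = W.ρB.rsmul (W.Q (W.r b u)) (P v) := by
  rw [W.dasm2c, W.dasm4b]

end RAvgBimodule

/-- For a bimodule `(N → B, l, r)` over a relative averaging algebra
`(A, M, P)`, the space `B` is a representation of the induced diassociative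
algebra `M_P` with `u ⊣ b = P(u)·b − Q(l(u,b))`, `u ⊢ b = P(u)·b`,
`b ⊣ u = b·P(u)`, `b ⊢ u = b·P(u) − Q(r(b,u))`. -/
theorem bimodule_gives_diassRep_on_B
    (A M B N : Type*) [Ring A] [AddCommGroup M] [AddCommGroup B] [AddCommGroup N]
    (ρM : ABimodule A M) (P : M → A) (hP : IsRelAvgOp ρM P)
    (W : RAvgBimodule B N ρM P) :
    IsDiassRep (M := M) (V := B)
      (fun u v => ρM.rsmul u (P v)) (fun u v => ρM.lsmul (P u) v)
      (fun u b => W.ρB.lsmul (P u) b - W.Q (W.l u b)) (fun u b => W.ρB.lsmul (P u) b)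
      (fun b u => W.ρB.rsmul b (P u)) (fun b u => W.ρB.rsmul b (P u) - W.Q (W.r b u)) := by
  intro u v b
  refine ⟨?_, ?_, ?_, ?_, ?_, ?_, ?_, ?_, ?_, ?_, ?_, ?_, ?_, ?_, ?_⟩ <;>
    simp only [hP.map_lsmul, hP.map_rsmul, W.ρB.mul_lsmul, W.ρB.rsmul_mul, W.ρB.lsmul_rsmul,
      W.ρB.lsmul_sub, W.ρB.sub_rsmul, W.Q_sub, W.l_sub, W.sub_r,
      W.Q_l_lsmul, W.Q_l_rsmul, W.Q_r_lsmul, W.Q_r_rsmul, W.dasm1b, ← W.dasm2b,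
      ← W.dasm3b, ← W.dasm4a] <;>
    abel
end

section
/- Let (A, {μ_k}) be an A∞-algebra and (M, {η_k}) a representation of it. Then the graded vector space A ⊕ M carries a Diass∞-algebra structure with operations π_k(y; (a₁,u₁), …, (a_k,u_k)) = (μ_k(a₁,…,a_k), η_k(a₁,…,a_{i−1}, u_i, a_{i+1},…,a_k)) for y ∈ Y_k written uniquely as the grafting y = y₁ ∨ y₂ with y₁ an (i−1)-tree; i.e. these π_k satisfy the higher diassociative identities. -/
/-!
The first component of `π_k` is `μ_k`, so the `A`-component of the `Diass∞` identity at a tree `y`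
is literally the `A∞` identity. The `M`-component is the representation identity with the
`M`-input at `q = y.pos`: the face maps move the root position exactly as the representation
identity moves the `M`-input. Deleting leaves `p + 1, …, p + l - 1` (the map `R₀`) leaves `q`
alone if `q < p`, sends it to `p` if `p ≤ q < p + l` (and then `Rᵢ y` has root position `q - p`,
the position of `u` inside the inner operation), and to `q - l + 1` if `q ≥ p + l`.
-/

/-- Planar binary trees; a tree with `n` internal (trivalent) vertices has `n+1`
leaves and represents an element of `Yₙ`. -/
inductive PBTree : Type
  | leaf : PBTree
  | node : PBTree → PBTree → PBTree

namespace PBTree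

/-- The number of internal vertices of a planar binary tree. -/
def vert : PBTree → ℕ
  | leaf => 0
  | node l r => l.vert + r.vert + 1

/-- The `i`-th face map `dᵢ : Yₙ → Yₙ₋₁`, removing the `i`-th leaf
(leaves are labelled `0, 1, …, n` from left to right). -/
def face : ℕ → PBTree → PBTree
  | _, leaf => leaf
  | _, node leaf leaf => leaf
  | i, node leaf (node a b) =>
      if i = 0 then node a b else node leaf (face (i - 1) (node a b))
  | i, node (node a b) leaf =>
      if i ≤ (node a b).vert then node (face i (node a b)) leaf else node a b
  | i, node (node a b) (node c d) =>
      if i ≤ (node a b).vert then node (face i (node a b)) (node c d)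
      else node (node a b) (face (i - (node a b).vert - 1) (node c d))

/-- `dcomp i c = dᵢ ∘ dᵢ₊₁ ∘ ⋯ ∘ dᵢ₊c₋₁`, a composite of `c` face maps. -/
def dcomp (i : ℕ) : ℕ → PBTree → PBTree
  | 0, t => t
  | c + 1, t => dcomp i c (face (i + c) t)

/-- The map `R₀^{k;i,l} : Y_{k+l-1} → Y_k`, `R₀ = dᵢ ∘ ⋯ ∘ d_{i+l-2}`
(here `i` is the 1-based position). -/
def R0 (i l : ℕ) (y : PBTree) : PBTree := dcomp i (l - 1) y

/-- The map `Rᵢ^{k;i,l} : Y_{k+l-1} → Y_l`,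
`Rᵢ = d₀ ∘ ⋯ ∘ d_{i-2} ∘ d_{i+l} ∘ ⋯ ∘ d_{k+l-1}`. -/
def Ri (k i l : ℕ) (y : PBTree) : PBTree := dcomp 0 (i - 1) (dcomp (i + l) (k - i) y)

/-- The position attached to the grafting decomposition `y = y₁ ∨ y₂`:
the number of vertices of the left subtree (0-based position of the `M`-input). -/
def pos : PBTree → ℕ
  | leaf => 0
  | node l _ => l.vert

end PBTree

/-- The structure maps `π_k` of the `Diass∞`-algebra `A ⊕ M` built from an
`A∞`-structure `μ` and a representation structure `η`:
`π_k(y; (a₁,u₁),…,(a_k,u_k)) = (μ_k(a₁,…,a_k), η_k(a₁,…,u_i,…,a_k))` where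
`y = y₁ ∨ y₂` with `y₁` an `(i−1)`-tree. Arguments are given as sequences
`ℕ → A × M` (only the first `k` entries are relevant); `η k p a u` has its
`M`-input `u` at 0-based position `p`, the value `a p` being irrelevant. -/
def diassOp {A M : Type*} [AddCommGroup A] [AddCommGroup M]
    (μ : ℕ → (ℕ → A) → A) (η : ℕ → ℕ → (ℕ → A) → M → M)
    (k : ℕ) (y : PBTree) (x : ℕ → A × M) : A × M :=
  (μ k (fun j => (x j).1), η k y.pos (fun j => (x j).1) ((x y.pos).2))

namespace PBTree

@[simp]
theorem vert_face (i : ℕ) (t : PBTree) : (face i t).vert = t.vert - 1 := by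
  induction t generalizing i with
  | leaf => rfl
  | node l r ihl ihr =>
    cases l with
    | leaf =>
      cases r with
      | leaf => rfl
      | node a b =>
        have := ihr (i - 1)
        simp only [face]
        split_ifs <;> simp only [vert] at * <;> omega
    | node a b =>
      have := ihl i
      cases r with
      | leaf =>
        simp only [face]
        split_ifs <;> simp only [vert] at * <;> omega
      | node c d =>
        have := ihr (i - (node a b).vert - 1)
        simp only [face]
        split_ifs <;> simp only [vert] at * <;> omega

theorem face_node_of_le {i : ℕ} {l : PBTree} (r : PBTree) (hl : l ≠ leaf) (hi : i ≤ l.vert) :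
    face i (node l r) = node (face i l) r := by
  cases l with
  | leaf => exact absurd rfl hl
  | node a b => cases r <;> simp only [face, if_pos hi]

theorem face_node_of_lt {i : ℕ} {r : PBTree} (l : PBTree) (hr : r ≠ leaf) (hi : l.vert < i) :
    face i (node l r) = node l (face (i - l.vert - 1) r) := by
  cases r with
  | leaf => exact absurd rfl hr
  | node c d =>
    cases l with
    | leaf => simp [face, vert, Nat.pos_iff_ne_zero.mp hi]
    | node a b => simp only [face, if_neg (Nat.not_le.mpr hi)]

theorem pos_lt_vert {t : PBTree} (ht : t ≠ leaf) : t.pos < t.vert := by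
  cases t with
  | leaf => exact absurd rfl ht
  | node l r => simp only [pos, vert]; omega

/-- Removing a leaf to the right of the root keeps the left subtree, provided the right subtree
is not a single leaf. -/
theorem pos_face_of_pos_lt {i : ℕ} {t : PBTree} (hi : t.pos < i) (ht : t.pos + 1 < t.vert) :
    (face i t).pos = t.pos := by
  cases t with
  | leaf => simp [vert] at ht
  | node l r =>
    have hr : r ≠ leaf := by rintro rfl; simp [pos, vert] at ht
    rw [face_node_of_lt l hr hi]
    rfl

theorem pos_face_of_le_pos {i : ℕ} {t : PBTree} (hpos : 0 < t.pos) (hi : i ≤ t.pos) :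
    (face i t).pos = t.pos - 1 := by
  cases t with
  | leaf => simp [pos] at hpos
  | node l r =>
    have hl : l ≠ leaf := by rintro rfl; simp [pos, vert] at hpos
    rw [face_node_of_le r hl hi]
    exact vert_face i l

theorem pos_dcomp_of_pos_lt {i c : ℕ} {t : PBTree} (hi : t.pos + 1 < i)
    (hc : i + c ≤ t.vert + 1) : (dcomp i c t).pos = t.pos := by
  induction c generalizing t with
  | zero => rfl
  | succ c ih =>
    have hface := pos_face_of_pos_lt (i := i + c) (t := t) (by omega) (by omega)
    simp only [dcomp]
    rw [ih (t := face (i + c) t) (by rw [hface]; omega) (by simp only [vert_face]; omega), hface]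

theorem pos_dcomp_of_le_pos {i c : ℕ} {t : PBTree} (hc : i + c ≤ t.pos) :
    (dcomp i c t).pos = t.pos - c := by
  induction c generalizing t with
  | zero => rfl
  | succ c ih =>
    have hface := pos_face_of_le_pos (i := i + c) (t := t) (by omega) (by omega)
    simp only [dcomp]
    rw [ih (t := face (i + c) t) (by rw [hface]; omega), hface]
    omega

/-- Deleting the leaves `p + 1, …, p + c` merges the leaves `p, …, p + c` into leaf `p`; so does
the root position when it lies among them. -/
theorem pos_dcomp_of_mem_Icc {p c : ℕ} {t : PBTree} (hp : p ≤ t.pos) (hc : t.pos ≤ p + c)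
    (hv : p + c < t.vert) : (dcomp (p + 1) c t).pos = p := by
  induction c generalizing t with
  | zero => simp only [dcomp]; omega
  | succ c ih =>
    have hface : (face (p + 1 + c) t).pos = min t.pos (p + c) := by
      rcases Nat.lt_or_ge t.pos (p + c + 1) with h | h
      · rw [pos_face_of_pos_lt (t := t) (by omega) (by omega)]; omega
      · rw [pos_face_of_le_pos (t := t) (by omega) (by omega)]; omega
    simp only [dcomp]
    exact ih (by omega) (by omega) (by simp only [vert_face]; omega)

variable {y : PBTree} {p l : ℕ}

theorem pos_R0_of_pos_lt (hq : y.pos < p) (hpl : p + l ≤ y.vert) : (R0 (p + 1) l y).pos = y.pos :=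
  pos_dcomp_of_pos_lt (by omega) (by omega)

theorem pos_R0_of_mem (hp : p ≤ y.pos) (hq : y.pos < p + l) (hpl : p + l ≤ y.vert) :
    (R0 (p + 1) l y).pos = p :=
  pos_dcomp_of_mem_Icc hp (by omega) (by omega)

theorem pos_R0_of_le_pos (hl : 1 ≤ l) (hq : p + l ≤ y.pos) :
    (R0 (p + 1) l y).pos = y.pos - l + 1 := by
  rw [R0, pos_dcomp_of_le_pos (by omega)]
  omega

theorem pos_Ri_of_mem {k : ℕ} (hp : p ≤ y.pos) (hq : y.pos < p + l) (hpl : p + l ≤ y.vert)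
    (hk : k + l ≤ y.vert + 1) : (Ri k (p + 1) l y).pos = y.pos - p := by
  have hinner : (dcomp (p + 1 + l) (k - (p + 1)) y).pos = y.pos :=
    pos_dcomp_of_pos_lt (by omega) (by omega)
  rw [Ri, Nat.add_sub_cancel, pos_dcomp_of_le_pos (by rw [hinner]; omega), hinner]

end PBTree

/-- The argument list `x₀, …, x_{p-1}, v, x_{p+l}, …` of `μ_k(a₁, …, μ_l(aᵢ, …), …)`. -/
def substBlock {α : Type*} (x : ℕ → α) (p l : ℕ) (v : α) : ℕ → α := fun j =>
  if j < p then x j else if j = p then v else x (j + l - 1)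

section substBlock

variable {α β : Type*} (x : ℕ → α) (p l : ℕ) (v : α)

theorem substBlock_of_lt {j : ℕ} (hj : j < p) : substBlock x p l v j = x j :=
  if_pos hj

theorem substBlock_self : substBlock x p l v p = v := by
  simp [substBlock]

theorem substBlock_of_gt {j : ℕ} (hj : p < j) : substBlock x p l v j = x (j + l - 1) := by
  simp [substBlock, Nat.not_lt.mpr hj.le, hj.ne']

theorem map_substBlock (f : α → β) :
    (fun j => f (substBlock x p l v j)) = substBlock (fun j => f (x j)) p l (f v) := by
  funext j
  simp only [substBlock]
  split_ifs <;> rfl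

end substBlock

section diassOp

variable {A M : Type*} [AddCommGroup A] [AddCommGroup M]
  {μ : ℕ → (ℕ → A) → A} {η : ℕ → ℕ → (ℕ → A) → M → M}

open PBTree

theorem fst_diassOp_substBlock (k l p : ℕ) (y y' : PBTree) (x x' : ℕ → A × M) :
    (diassOp μ η k y (substBlock x p l (diassOp μ η l y' x'))).1 =
      μ k (substBlock (fun j => (x j).1) p l (μ l fun j => (x' j).1)) := by
  rw [diassOp, map_substBlock x p l _ Prod.fst]
  rfl

theorem snd_diassOp_R0_substBlock
    (hηext : ∀ (k p : ℕ) (a a' : ℕ → A) (u : M),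
      (∀ j < k, j ≠ p → a j = a' j) → η k p a u = η k p a' u)
    {y : PBTree} {l p : ℕ} (hl : 1 ≤ l) (hpl : p + l ≤ y.vert) (x : ℕ → A × M) :
    (diassOp μ η (y.vert - l + 1) (R0 (p + 1) l y)
        (substBlock x p l
          (diassOp μ η l (Ri (y.vert - l + 1) (p + 1) l y) fun t => x (t + p)))).2 =
      if y.pos < p then
        η (y.vert - l + 1) y.pos
          (substBlock (fun j => (x j).1) p l (μ l fun t => (x (t + p)).1)) (x y.pos).2
      else if y.pos < p + l then
        η (y.vert - l + 1) p (fun j => if j < p then (x j).1 else (x (j + l - 1)).1)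
          (η l (y.pos - p) (fun t => (x (t + p)).1) (x y.pos).2)
      else
        η (y.vert - l + 1) (y.pos - l + 1)
          (substBlock (fun j => (x j).1) p l (μ l fun t => (x (t + p)).1)) (x y.pos).2 := by
  rw [diassOp, map_substBlock x p l _ Prod.fst]
  split_ifs with hlt hmem
  · rw [pos_R0_of_pos_lt hlt hpl, substBlock_of_lt x p l _ hlt]
    rfl
  · rw [pos_R0_of_mem (Nat.not_lt.mp hlt) hmem hpl, substBlock_self, diassOp,
      pos_Ri_of_mem (Nat.not_lt.mp hlt) hmem hpl (by omega), Nat.sub_add_cancel (Nat.not_lt.mp hlt)]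
    refine hηext _ _ _ _ _ fun j _ hjp => ?_
    rcases Nat.lt_or_gt_of_ne hjp with hj | hj
    · simp only [substBlock_of_lt _ _ _ _ hj, if_pos hj]
    · simp only [substBlock_of_gt _ _ _ _ hj, if_neg (Nat.not_lt.mpr hj.le)]
  · rw [pos_R0_of_le_pos hl (Nat.not_lt.mp hmem), substBlock_of_gt x p l _ (by omega),
      show y.pos - l + 1 + l - 1 = y.pos by omega]
    rfl

end diassOp

theorem aInfinityRep_gives_diassInfinity_general
    (A M : Type*) [AddCommGroup A] [AddCommGroup M]
    (GA : ℤ → AddSubgroup A) (GM : ℤ → AddSubgroup M)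
    (μ : ℕ → (ℕ → A) → A) (η : ℕ → ℕ → (ℕ → A) → M → M)
    -- `μ_k` (resp. `η_k`) depends only on its `k` (relevant) inputs
    (hηext : ∀ (k p : ℕ) (a a' : ℕ → A) (u : M),
      (∀ j < k, j ≠ p → a j = a' j) → η k p a u = η k p a' u)
    -- the higher associativity identities of the `A∞`-algebra `(A, {μ_k})`
    (hAinf : ∀ n, 1 ≤ n → ∀ (d : ℕ → ℤ) (a : ℕ → A),
      (∀ j < n, a j ∈ GA (d j)) →
      ∑ l ∈ Finset.Icc 1 n, ∑ p ∈ Finset.range (n - l + 1),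
        (((-1 : ℤˣ) ^ (∑ j ∈ Finset.range p, d j) : ℤˣ) : ℤ) •
          μ (n - l + 1) (fun j =>
            if j < p then a j
            else if j = p then μ l (fun t => a (t + p))
            else a (j + l - 1)) = 0)
    -- the representation identities for `(M, {η_k})`: the higher associativity
    -- identities with exactly one input (at position `q`) taken from `M`
    (hRep : ∀ n, 1 ≤ n → ∀ q < n, ∀ (d : ℕ → ℤ) (a : ℕ → A) (u : M),
      (∀ j < n, j ≠ q → a j ∈ GA (d j)) → u ∈ GM (d q) →
      ∑ l ∈ Finset.Icc 1 n, ∑ p ∈ Finset.range (n - l + 1),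
        (((-1 : ℤˣ) ^ (∑ j ∈ Finset.range p, d j) : ℤˣ) : ℤ) •
          (if q < p then
            η (n - l + 1) q (fun j =>
              if j < p then a j
              else if j = p then μ l (fun t => a (t + p))
              else a (j + l - 1)) u
          else if q < p + l then
            η (n - l + 1) p (fun j => if j < p then a j else a (j + l - 1))
              (η l (q - p) (fun t => a (t + p)) u)
          else
            η (n - l + 1) (q - l + 1) (fun j =>
              if j < p then a j
              else if j = p then μ l (fun t => a (t + p))
              else a (j + l - 1)) u) = 0) :
    -- conclusion: the `π_k` satisfy the higher diassociative identities
    ∀ n, 1 ≤ n → ∀ y : PBTree, y.vert = n →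
      ∀ (d : ℕ → ℤ) (x : ℕ → A × M),
        (∀ j < n, (x j).1 ∈ GA (d j) ∧ (x j).2 ∈ GM (d j)) →
        ∑ l ∈ Finset.Icc 1 n, ∑ p ∈ Finset.range (n - l + 1),
          (((-1 : ℤˣ) ^ (∑ j ∈ Finset.range p, d j) : ℤˣ) : ℤ) •
            diassOp μ η (n - l + 1) (PBTree.R0 (p + 1) l y) (fun j =>
              if j < p then x j
              else if j = p then
                diassOp μ η l (PBTree.Ri (n - l + 1) (p + 1) l y) (fun t => x (t + p))
              else x (j + l - 1)) = 0 := by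
  intro n hn y hy d x hx
  subst hy
  have hpos : y.pos < y.vert := PBTree.pos_lt_vert (by rintro rfl; exact absurd hn (by decide))
  refine Prod.ext ?_ ?_
  · simp only [Prod.fst_sum, Prod.smul_fst, Prod.fst_zero]
    refine Eq.trans ?_ (hAinf y.vert hn d (fun j => (x j).1) fun j hj => (hx j hj).1)
    refine Finset.sum_congr rfl fun l _ => Finset.sum_congr rfl fun p _ => ?_
    exact congrArg _ (fst_diassOp_substBlock ..)
  · simp only [Prod.snd_sum, Prod.smul_snd, Prod.snd_zero]
    refine Eq.trans ?_ (hRep y.vert hn y.pos hpos d (fun j => (x j).1) (x y.pos).2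
      (fun j hj _ => (hx j hj).1) (hx y.pos hpos).2)
    refine Finset.sum_congr rfl fun l hl => Finset.sum_congr rfl fun p hp => ?_
    rw [Finset.mem_Icc] at hl
    rw [Finset.mem_range] at hp
    exact congrArg _ (snd_diassOp_R0_substBlock hηext hl.1 (by omega) x)

/-- Let `(A, {μ_k})` be an `A∞`-algebra and `(M, {η_k})` a
representation of it (with gradings `GA`, `GM`; all structure maps have degree 1
and satisfy the higher (representation) associativity identities with Koszul
signs). Then the graded vector space `A ⊕ M` carries a `Diass∞`-algebra
structure with operations `π_k(y; (a₁,u₁),…) = (μ_k(a₁,…), η_k(a₁,…,u_i,…))`,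
`i` determined by the grafting decomposition `y = y₁ ∨ y₂` with `y₁` an
`(i−1)`-tree: the `π_k` satisfy the higher diassociative identities. -/
theorem aInfinityRep_gives_diassInfinity
    (A M : Type*) [AddCommGroup A] [AddCommGroup M]
    (GA : ℤ → AddSubgroup A) (GM : ℤ → AddSubgroup M)
    (μ : ℕ → (ℕ → A) → A) (η : ℕ → ℕ → (ℕ → A) → M → M)
    -- `μ_k` (resp. `η_k`) depends only on its `k` (relevant) inputs
    (hμext : ∀ (k : ℕ) (a a' : ℕ → A), (∀ j < k, a j = a' j) → μ k a = μ k a')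
    (hηext : ∀ (k p : ℕ) (a a' : ℕ → A) (u : M),
      (∀ j < k, j ≠ p → a j = a' j) → η k p a u = η k p a' u)
    -- the structure maps have degree 1
    (hμdeg : ∀ (k : ℕ) (d : ℕ → ℤ) (a : ℕ → A),
      (∀ j < k, a j ∈ GA (d j)) →
      μ k a ∈ GA ((∑ j ∈ Finset.range k, d j) + 1))
    (hηdeg : ∀ (k p : ℕ) (d : ℕ → ℤ) (a : ℕ → A) (u : M), p < k →
      (∀ j < k, j ≠ p → a j ∈ GA (d j)) → u ∈ GM (d p) →
      η k p a u ∈ GM ((∑ j ∈ Finset.range k, d j) + 1))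
    -- the higher associativity identities of the `A∞`-algebra `(A, {μ_k})`
    (hAinf : ∀ n, 1 ≤ n → ∀ (d : ℕ → ℤ) (a : ℕ → A),
      (∀ j < n, a j ∈ GA (d j)) →
      ∑ l ∈ Finset.Icc 1 n, ∑ p ∈ Finset.range (n - l + 1),
        (((-1 : ℤˣ) ^ (∑ j ∈ Finset.range p, d j) : ℤˣ) : ℤ) •
          μ (n - l + 1) (fun j =>
            if j < p then a j
            else if j = p then μ l (fun t => a (t + p))
            else a (j + l - 1)) = 0)
    -- the representation identities for `(M, {η_k})`: the higher associativity
    -- identities with exactly one input (at position `q`) taken from `M`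
    (hRep : ∀ n, 1 ≤ n → ∀ q < n, ∀ (d : ℕ → ℤ) (a : ℕ → A) (u : M),
      (∀ j < n, j ≠ q → a j ∈ GA (d j)) → u ∈ GM (d q) →
      ∑ l ∈ Finset.Icc 1 n, ∑ p ∈ Finset.range (n - l + 1),
        (((-1 : ℤˣ) ^ (∑ j ∈ Finset.range p, d j) : ℤˣ) : ℤ) •
          (if q < p then
            η (n - l + 1) q (fun j =>
              if j < p then a j
              else if j = p then μ l (fun t => a (t + p))
              else a (j + l - 1)) u
          else if q < p + l then
            η (n - l + 1) p (fun j => if j < p then a j else a (j + l - 1))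
              (η l (q - p) (fun t => a (t + p)) u)
          else
            η (n - l + 1) (q - l + 1) (fun j =>
              if j < p then a j
              else if j = p then μ l (fun t => a (t + p))
              else a (j + l - 1)) u) = 0) :
    -- conclusion: the `π_k` satisfy the higher diassociative identities
    ∀ n, 1 ≤ n → ∀ y : PBTree, y.vert = n →
      ∀ (d : ℕ → ℤ) (x : ℕ → A × M),
        (∀ j < n, (x j).1 ∈ GA (d j) ∧ (x j).2 ∈ GM (d j)) →
        ∑ l ∈ Finset.Icc 1 n, ∑ p ∈ Finset.range (n - l + 1),
          (((-1 : ℤˣ) ^ (∑ j ∈ Finset.range p, d j) : ℤˣ) : ℤ) •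
            diassOp μ η (n - l + 1) (PBTree.R0 (p + 1) l y) (fun j =>
              if j < p then x j
              else if j = p then
                diassOp μ η l (PBTree.Ri (n - l + 1) (p + 1) l y) (fun t => x (t + p))
              else x (j + l - 1)) = 0 :=
  aInfinityRep_gives_diassInfinity_general A M GA GM μ η hηext hAinf hRep
end
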